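/- arXiv:0909.3140 — 7 statements merged into one kernel-verified Lean document; each statement's English description precedes it below -/
import Mathlib

section
/- Let (M,q) be a metric group and let L1, L2, L3 be Lagrangian subgroups of M. Then the natural number |L1| · |L1 ∩ L2| · |L2 ∩ L3| · |L1 ∩ L3| is a perfect square. (Equivalently, writing d(Li,Lj) for the class of √|M| / |Li ∩ Lj| in the group ℚ₊ˣ/(ℚ₊ˣ)² of positive rationals modulo squares, one has d(L1,L2)·d(L2,L3) = d(L1,L3).) -/
/-- The symmetric bicharacter associated to a quadratic form `q` with values in `ℂˣ`. -/
def bq {M : Type*} [AddCommGroup M] (q : M → ℂˣ) (x y : M) : ℂˣ :=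
  q (x + y) * (q x)⁻¹ * (q y)⁻¹

/-- `(M, q)` is a metric group: `q` is even, `b_q` is biadditive and nondegenerate. -/
def IsMetric {M : Type*} [AddCommGroup M] (q : M → ℂˣ) : Prop :=
  (∀ x, q (-x) = q x) ∧
  (∀ x y z, bq q (x + y) z = bq q x z * bq q y z) ∧
  (∀ x y z, bq q x (y + z) = bq q x y * bq q x z) ∧
  (∀ x, (∀ y, bq q x y = 1) → x = 0)

/-- A subgroup `L` is Lagrangian for `q` if `q = 1` on `L` and `|L|² = |M|`. -/
def IsLagrangian {M : Type*} [AddCommGroup M] (q : M → ℂˣ) (L : AddSubgroup M) : Prop :=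
  (∀ x ∈ L, q x = 1) ∧ Nat.card L ^ 2 = Nat.card M

/-!
Write `b` for the pairing `b_q`. Character sums give `|A^⊥| · |A| = |M|`, so `A^⊥⊥ = A` and a
Lagrangian is its own orthogonal. On the pairs `(y, z) ∈ L2 × L3` with `y + z ∈ L1` the form
`((y, z), (y', z')) ↦ b(y, z')` is alternating, since `b(y, z) = q(y + z) q(y)⁻¹ q(z)⁻¹ = 1`. Its
kernel is the preimage of `L1 ∩ L2 + L1 ∩ L3` under `(y, z) ↦ y + z`, which maps onto
`L1 ∩ (L2 + L3) = (L1 + L2 ∩ L3)^⊥`. An alternating form has a maximal isotropic subgroup `L`, which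
is its own orthogonal (a vector orthogonal to `L` can be adjoined to it), so the index of its kernel
is `[V : L]²`. Hence `[L1 ∩ (L2 + L3) : L1 ∩ L2 + L1 ∩ L3]` is a square, and the orders of sums and
intersections of the `Li` turn this into the claim.
-/

namespace AddSubgroup

variable {G : Type*} [AddCommGroup G]

theorem card_inf_mul_relIndex (H K : AddSubgroup G) :
    Nat.card (H ⊓ K : AddSubgroup G) * H.relIndex K = Nat.card K := by
  have h := relIndex_inf_mul_relIndex ⊥ H K
  rwa [bot_inf_eq, relIndex_bot_left, relIndex_bot_left] at h

theorem card_sup_mul_card_inf (H K : AddSubgroup G) :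
    Nat.card (H ⊔ K : AddSubgroup G) * Nat.card (H ⊓ K : AddSubgroup G) =
      Nat.card H * Nat.card K := by
  have hsup := card_inf_mul_relIndex K (H ⊔ K)
  rw [inf_of_le_left le_sup_right, relIndex_sup_right] at hsup
  rw [← hsup, ← card_inf_mul_relIndex K H, inf_comm]
  ring

end AddSubgroup

namespace AddMonoidHom

variable {M N P : Type*} [AddCommGroup M] [AddCommGroup N] [AddCommGroup P]

open Classical in
theorem sum_toMul_eq_ite {G : Type*} [AddCommGroup G] [Fintype G] (ψ : G →+ Additive ℂˣ) :
    ∑ g, ((ψ g).toMul : ℂ) = if ∀ g, ψ g = 0 then (Fintype.card G : ℂ) else 0 := by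
  convert AddChar.sum_eq_ite ((Units.coeHom ℂ).compAddChar (AddChar.toAddMonoidHomEquiv.symm ψ))
    using 2
  · rfl
  · rw [AddChar.eq_zero_iff]
    exact forall_congr' fun _ => Units.val_eq_one.symm

def perp (B : M →+ N →+ P) (A : AddSubgroup N) : AddSubgroup M :=
  (B.compl₂ A.subtype).ker

@[simp]
theorem mem_perp {B : M →+ N →+ P} {A : AddSubgroup N} {x : M} :
    x ∈ B.perp A ↔ ∀ a ∈ A, B x a = 0 := by
  simp [perp, mem_ker, AddMonoidHom.ext_iff]

theorem perp_sup (B : M →+ N →+ P) (A C : AddSubgroup N) :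
    B.perp (A ⊔ C) = B.perp A ⊓ B.perp C := by
  ext x
  simp only [mem_perp, AddSubgroup.mem_inf]
  refine ⟨fun h => ⟨fun a ha => h a (AddSubgroup.mem_sup_left ha),
    fun c hc => h c (AddSubgroup.mem_sup_right hc)⟩, fun ⟨hA, hC⟩ y hy => ?_⟩
  obtain ⟨a, ha, c, hc, rfl⟩ := AddSubgroup.mem_sup.mp hy
  rw [map_add, hA a ha, hC c hc, add_zero]

theorem ker_le_perp (B : M →+ N →+ P) (A : AddSubgroup N) : B.ker ≤ B.perp A :=
  fun x hx => mem_perp.mpr fun a _ => by rw [mem_ker.mp hx, zero_apply]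

theorem card_perp_mul_card [Finite M] [Finite N] (B : M →+ N →+ Additive ℂˣ)
    (A : AddSubgroup N) :
    Nat.card (B.perp A) * Nat.card A = Nat.card M * Nat.card (A ⊓ B.flip.ker : AddSubgroup N) := by
  classical
  have := Fintype.ofFinite M
  have := Fintype.ofFinite N
  have hM : ∀ x : M, ∑ a : A, ((B x a).toMul : ℂ) =
      if x ∈ B.perp A then (Fintype.card A : ℂ) else 0 := by
    intro x
    refine (sum_toMul_eq_ite ((B x).comp A.subtype)).trans ?_
    simp
  have hA : ∀ a : A, ∑ x : M, ((B x a).toMul : ℂ) =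
      if (a : N) ∈ B.flip.ker then (Fintype.card M : ℂ) else 0 := by
    intro a
    refine (sum_toMul_eq_ite (B.flip a)).trans ?_
    simp only [mem_ker, AddMonoidHom.ext_iff, flip_apply, zero_apply]
    congr
  have hsum := Finset.sum_comm (s := Finset.univ) (t := Finset.univ)
    (f := fun (x : M) (a : A) => ((B x a).toMul : ℂ))
  simp only [hM, hA, Finset.sum_ite, Finset.sum_const, mul_zero, add_zero, nsmul_eq_mul,
    ← Fintype.card_subtype] at hsum
  have hinf : Nat.card (A ⊓ B.flip.ker : AddSubgroup N) =
      Fintype.card {a : A // (a : N) ∈ B.flip.ker} :=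
    (Nat.card_congr (Equiv.subtypeSubtypeEquivSubtypeInter (· ∈ A) (· ∈ B.flip.ker)).symm).trans
      Nat.card_eq_fintype_card
  rw [hinf, Nat.card_eq_fintype_card, Nat.card_eq_fintype_card, Nat.card_eq_fintype_card,
    mul_comm (Fintype.card M)]
  exact_mod_cast hsum

theorem card_perp_mul_card_of_ker_flip_eq_bot [Finite M] [Finite N]
    {B : M →+ N →+ Additive ℂˣ} (hB : B.flip.ker = ⊥) (A : AddSubgroup N) :
    Nat.card (B.perp A) * Nat.card A = Nat.card M := by
  rw [card_perp_mul_card, hB, inf_bot_eq, AddSubgroup.card_bot, mul_one]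

section Reflexive

variable {B : M →+ M →+ P} (hB : ∀ x y, B x y = 0 → B y x = 0)
include hB

theorem le_perp_comm {A C : AddSubgroup M} : A ≤ B.perp C ↔ C ≤ B.perp A := by
  suffices ∀ {A C : AddSubgroup M}, A ≤ B.perp C → C ≤ B.perp A from ⟨this, this⟩
  intro A C h c hc
  exact mem_perp.mpr fun a ha => hB a c (mem_perp.mp (h ha) c hc)

theorem le_perp_perp (A : AddSubgroup M) : A ≤ B.perp (B.perp A) :=
  (le_perp_comm hB).mp le_rfl

end Reflexive

section Nondegenerate

variable [Finite M] {B : M →+ M →+ Additive ℂˣ} (hB : ∀ x y, B x y = 0 → B y x = 0)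
  (hnd : B.flip.ker = ⊥)
include hB hnd

theorem perp_perp (A : AddSubgroup M) : B.perp (B.perp A) = A := by
  refine (AddSubgroup.eq_of_le_of_card_ge (le_perp_perp hB A) (le_of_eq ?_)).symm
  have h := card_perp_mul_card_of_ker_flip_eq_bot hnd A
  rw [← card_perp_mul_card_of_ker_flip_eq_bot hnd (B.perp A)] at h
  exact Nat.eq_of_mul_eq_mul_right Nat.card_pos (h.symm.trans (mul_comm _ _))

theorem perp_inf (A C : AddSubgroup M) : B.perp (A ⊓ C) = B.perp A ⊔ B.perp C := by
  conv_lhs => rw [← perp_perp hB hnd A, ← perp_perp hB hnd C, ← perp_sup]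
  exact perp_perp hB hnd _

end Nondegenerate

section Alternating

variable {V : Type*} [AddCommGroup V] {F : V →+ V →+ P} (hF : ∀ v, F v v = 0)
include hF

theorem neg_apply_swap (v w : V) : -F v w = F w v := by
  have h := hF (v + w)
  simp only [map_add, add_apply, hF, zero_add, add_zero] at h
  exact neg_eq_of_add_eq_zero_left h

theorem eq_zero_swap {v w : V} (h : F v w = 0) : F w v = 0 := by
  rw [← neg_apply_swap hF, h, neg_zero]

theorem flip_ker_eq_ker : F.flip.ker = F.ker := by
  ext v
  simp only [mem_ker, AddMonoidHom.ext_iff, flip_apply, zero_apply]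
  exact ⟨fun h w => eq_zero_swap hF (h w), fun h w => eq_zero_swap hF (h w)⟩

theorem exists_perp_eq_self [Finite V] : ∃ L : AddSubgroup V, F.perp L = L := by
  obtain ⟨L, hL⟩ := (Set.toFinite {L : AddSubgroup V | L ≤ F.perp L}).exists_maximal
    ⟨⊥, (bot_le : ⊥ ≤ F.perp ⊥)⟩
  refine ⟨L, le_antisymm (fun v hv => ?_) hL.prop⟩
  have hvL : AddSubgroup.zmultiples v ≤ F.perp L := AddSubgroup.zmultiples_le.mpr hv
  have hvv : AddSubgroup.zmultiples v ≤ F.perp (AddSubgroup.zmultiples v) := by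
    rw [AddSubgroup.zmultiples_le, mem_perp]
    rintro _ ⟨k, rfl⟩
    simp [hF]
  have hiso : L ⊔ AddSubgroup.zmultiples v ≤ F.perp (L ⊔ AddSubgroup.zmultiples v) := by
    rw [perp_sup]
    exact sup_le (le_inf hL.prop ((le_perp_comm (fun _ _ => eq_zero_swap hF)).mp hvL))
      (le_inf hvL hvv)
  exact hL.2 hiso le_sup_left (AddSubgroup.mem_sup_right (AddSubgroup.mem_zmultiples v))

end Alternating

theorem isSquare_index_ker {V : Type*} [AddCommGroup V] [Finite V]
    {F : V →+ V →+ Additive ℂˣ} (hF : ∀ v, F v v = 0) : IsSquare F.ker.index := by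
  obtain ⟨L, hL⟩ := exists_perp_eq_self hF
  have hcard := card_perp_mul_card F L
  rw [hL, flip_ker_eq_ker hF, inf_of_le_right (hL ▸ ker_le_perp F L)] at hcard
  have hker := F.ker.card_mul_index
  have hLV := L.card_mul_index
  have hkerL : Nat.card F.ker * (L.index * L.index) = Nat.card V := by
    refine Nat.eq_of_mul_eq_mul_left (Nat.card_pos (α := V)) ?_
    calc Nat.card V * (Nat.card F.ker * (L.index * L.index))
        = (Nat.card L * Nat.card L) * (L.index * L.index) := by rw [hcard]; ring
      _ = Nat.card V * Nat.card V := by rw [← hLV]; ring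
  exact ⟨L.index, Nat.eq_of_mul_eq_mul_left (Nat.card_pos (α := F.ker)) (hker.trans hkerL.symm)⟩

end AddMonoidHom


theorem bq_comm {M : Type*} [AddCommGroup M] (q : M → ℂˣ) (x y : M) : bq q x y = bq q y x := by
  simp only [bq, add_comm x y, mul_right_comm]

theorem bq_eq_one {M : Type*} [AddCommGroup M] {q : M → ℂˣ} {x y : M} (hx : q x = 1)
    (hy : q y = 1) (hxy : q (x + y) = 1) : bq q x y = 1 := by
  simp [bq, hx, hy, hxy]

namespace IsMetric

variable {M : Type*} [AddCommGroup M] {q : M → ℂˣ} (hq : IsMetric q)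

def pairing : M →+ M →+ Additive ℂˣ :=
  AddMonoidHom.mk' (fun x => AddMonoidHom.mk' (fun y => Additive.ofMul (bq q x y))
    fun y z => by rw [hq.2.2.1 x y z, ofMul_mul])
    fun x y => AddMonoidHom.ext fun z => congrArg Additive.ofMul (hq.2.1 x y z)

@[simp]
theorem pairing_apply (x y : M) : hq.pairing x y = Additive.ofMul (bq q x y) := rfl

theorem pairing_comm (x y : M) : hq.pairing x y = hq.pairing y x := by
  rw [pairing_apply, pairing_apply, bq_comm]

theorem ker_flip_pairing : hq.pairing.flip.ker = ⊥ := by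
  refine (AddSubgroup.eq_bot_iff_forall _).mpr fun x hx => hq.2.2.2 x fun y => ?_
  have := AddMonoidHom.mem_ker.mp hx
  rw [bq_comm, ← ofMul_eq_zero, ← hq.pairing_apply, ← AddMonoidHom.flip_apply, this,
    AddMonoidHom.zero_apply]

theorem pairing_eq_zero_swap {x y : M} (h : hq.pairing x y = 0) : hq.pairing y x = 0 :=
  hq.pairing_comm x y ▸ h

theorem pairing_eq_zero_of_isotropic {L : AddSubgroup M} (hL : ∀ x ∈ L, q x = 1) {x y : M}
    (hx : x ∈ L) (hy : y ∈ L) : hq.pairing x y = 0 := by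
  rw [pairing_apply, bq_eq_one (hL x hx) (hL y hy) (hL _ (add_mem hx hy)), ofMul_one]

theorem le_perp_of_isotropic {L : AddSubgroup M} (hL : ∀ x ∈ L, q x = 1) :
    L ≤ hq.pairing.perp L :=
  fun _ hx => AddMonoidHom.mem_perp.mpr fun _ hy => hq.pairing_eq_zero_of_isotropic hL hx hy

theorem perp_eq_of_isLagrangian [Finite M] {L : AddSubgroup M} (hL : IsLagrangian q L) :
    hq.pairing.perp L = L := by
  refine (AddSubgroup.eq_of_le_of_card_ge (hq.le_perp_of_isotropic hL.1) (le_of_eq ?_)).symm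
  have h := AddMonoidHom.card_perp_mul_card_of_ker_flip_eq_bot hq.ker_flip_pairing L
  rw [← hL.2, sq] at h
  exact Nat.eq_of_mul_eq_mul_right Nat.card_pos h

theorem perp_sup_inf [Finite M] {L1 L2 L3 : AddSubgroup M} (h1 : IsLagrangian q L1)
    (h2 : IsLagrangian q L2) (h3 : IsLagrangian q L3) :
    hq.pairing.perp (L1 ⊔ L2 ⊓ L3) = L1 ⊓ (L2 ⊔ L3) := by
  rw [AddMonoidHom.perp_sup,
    AddMonoidHom.perp_inf (fun _ _ => hq.pairing_eq_zero_swap) hq.ker_flip_pairing,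
    hq.perp_eq_of_isLagrangian h1, hq.perp_eq_of_isLagrangian h2, hq.perp_eq_of_isLagrangian h3]

end IsMetric

section Maslov

variable {M : Type*} [AddCommGroup M] {L1 L2 L3 : AddSubgroup M}

variable (L1 L2 L3) in
def maslovDomain : AddSubgroup (M × M) :=
  L2.prod L3 ⊓ L1.comap ((AddMonoidHom.id M).coprod (AddMonoidHom.id M))

theorem mem_maslovDomain {p : M × M} :
    p ∈ maslovDomain L1 L2 L3 ↔ p.1 ∈ L2 ∧ p.2 ∈ L3 ∧ p.1 + p.2 ∈ L1 := by
  simp [maslovDomain, AddSubgroup.mem_prod, and_assoc]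

variable (L1 L2 L3) in
def maslovSum : maslovDomain L1 L2 L3 →+ (L1 ⊓ (L2 ⊔ L3) : AddSubgroup M) :=
  AddMonoidHom.codRestrict
    (((AddMonoidHom.id M).coprod (AddMonoidHom.id M)).comp (maslovDomain L1 L2 L3).subtype) _
    fun p => by
      obtain ⟨h2, h3, h1⟩ := mem_maslovDomain.mp p.2
      exact ⟨h1, AddSubgroup.add_mem_sup h2 h3⟩

@[simp]
theorem coe_maslovSum (p : maslovDomain L1 L2 L3) :
    (maslovSum L1 L2 L3 p : M) = (p : M × M).1 + (p : M × M).2 := rfl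

theorem maslovSum_surjective : Function.Surjective (maslovSum L1 L2 L3) := by
  rintro ⟨x, hx1, hx⟩
  obtain ⟨y, hy, z, hz, rfl⟩ := AddSubgroup.mem_sup.mp hx
  exact ⟨⟨(y, z), mem_maslovDomain.mpr ⟨hy, hz, hx1⟩⟩, rfl⟩

variable {q : M → ℂˣ} (hq : IsMetric q)

variable (L1 L2 L3) in
def IsMetric.maslovForm :
    maslovDomain L1 L2 L3 →+ maslovDomain L1 L2 L3 →+ Additive ℂˣ :=
  (hq.pairing.comp ((AddMonoidHom.fst M M).comp (maslovDomain L1 L2 L3).subtype)).compl₂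
    ((AddMonoidHom.snd M M).comp (maslovDomain L1 L2 L3).subtype)

@[simp]
theorem IsMetric.maslovForm_apply (p p' : maslovDomain L1 L2 L3) :
    hq.maslovForm L1 L2 L3 p p' = hq.pairing (p : M × M).1 (p' : M × M).2 := rfl

theorem IsMetric.maslovForm_self (h1 : ∀ x ∈ L1, q x = 1) (h2 : ∀ x ∈ L2, q x = 1)
    (h3 : ∀ x ∈ L3, q x = 1) (p : maslovDomain L1 L2 L3) : hq.maslovForm L1 L2 L3 p p = 0 := by
  obtain ⟨hy, hz, hyz⟩ := mem_maslovDomain.mp p.2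
  rw [maslovForm_apply, pairing_apply, bq_eq_one (h2 _ hy) (h3 _ hz) (h1 _ hyz), ofMul_one]

theorem IsMetric.ker_maslovForm [Finite M] (h1 : IsLagrangian q L1) (h2 : IsLagrangian q L2)
    (h3 : IsLagrangian q L3) :
    (hq.maslovForm L1 L2 L3).ker =
      ((L1 ⊓ L2 ⊔ L1 ⊓ L3).addSubgroupOf (L1 ⊓ (L2 ⊔ L3))).comap (maslovSum L1 L2 L3) := by
  ext ⟨⟨y, z⟩, hp⟩
  obtain ⟨hy, hz, hyz⟩ : y ∈ L2 ∧ z ∈ L3 ∧ y + z ∈ L1 := mem_maslovDomain.mp hp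
  simp only [AddMonoidHom.mem_ker, AddSubgroup.mem_comap, AddSubgroup.mem_addSubgroupOf,
    coe_maslovSum, AddMonoidHom.ext_iff, maslovForm_apply, AddMonoidHom.zero_apply, Subtype.forall,
    Prod.forall, mem_maslovDomain]
  constructor
  · intro h
    have hyJ : y ∈ hq.pairing.perp (L1 ⊓ (L2 ⊔ L3)) := by
      refine AddMonoidHom.mem_perp.mpr fun x hx => ?_
      obtain ⟨⟨⟨y', z'⟩, hp'⟩, hyz'⟩ :=
        maslovSum_surjective (⟨x, hx⟩ : (L1 ⊓ (L2 ⊔ L3) : AddSubgroup M))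
      obtain ⟨hy', hz', hyz''⟩ := mem_maslovDomain.mp hp'
      rw [show x = y' + z' from (congrArg Subtype.val hyz').symm, map_add,
        hq.pairing_eq_zero_of_isotropic h2.1 hy hy', h y' z' ⟨hy', hz', hyz''⟩, add_zero]
    rw [← hq.perp_sup_inf h1 h2 h3,
      AddMonoidHom.perp_perp (fun _ _ => hq.pairing_eq_zero_swap) hq.ker_flip_pairing] at hyJ
    obtain ⟨l, hl, w, ⟨hw2, hw3⟩, rfl⟩ := AddSubgroup.mem_sup.mp hyJ
    rw [add_assoc]
    have hl2 : l ∈ L2 := by simpa using sub_mem hy hw2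
    have hwz1 : w + z ∈ L1 := by simpa only [add_assoc, add_sub_cancel_left] using sub_mem hyz hl
    exact AddSubgroup.add_mem_sup ⟨hl, hl2⟩ ⟨hwz1, add_mem hw3 hz⟩
  · rintro hyz' y' z' ⟨hy', hz', hyz''⟩
    obtain ⟨a, ⟨ha1, ha2⟩, b, ⟨hb1, hb3⟩, hab⟩ := AddSubgroup.mem_sup.mp hyz'
    have ha : hq.pairing a z' = 0 := by
      have h := map_sub (hq.pairing a) (y' + z') y'
      rwa [add_sub_cancel_left, hq.pairing_eq_zero_of_isotropic h1.1 ha1 hyz'',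
        hq.pairing_eq_zero_of_isotropic h2.1 ha2 hy', sub_zero] at h
    have hy_eq : y = a + (b - z) := by rw [← add_sub_assoc, hab, add_sub_cancel_right]
    rw [hy_eq, map_add, AddMonoidHom.add_apply, ha,
      hq.pairing_eq_zero_of_isotropic h3.1 (sub_mem hb3 hz) hz', add_zero]

theorem IsMetric.isSquare_relIndex [Finite M] (hq : IsMetric q) (h1 : IsLagrangian q L1)
    (h2 : IsLagrangian q L2) (h3 : IsLagrangian q L3) :
    IsSquare ((L1 ⊓ L2 ⊔ L1 ⊓ L3).relIndex (L1 ⊓ (L2 ⊔ L3))) := by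
  have h := AddMonoidHom.isSquare_index_ker (hq.maslovForm_self h1.1 h2.1 h3.1)
  rwa [hq.ker_maslovForm h1 h2 h3, AddSubgroup.index_comap_of_surjective _ maslovSum_surjective]
    at h

end Maslov

theorem IsMetric.card_inf_sup_mul_card_inf {M : Type*} [AddCommGroup M] [Finite M]
    {q : M → ℂˣ} (hq : IsMetric q) {L1 L2 L3 : AddSubgroup M} (h1 : IsLagrangian q L1)
    (h2 : IsLagrangian q L2) (h3 : IsLagrangian q L3) :
    Nat.card (L1 ⊓ (L2 ⊔ L3) : AddSubgroup M) * Nat.card (L2 ⊓ L3 : AddSubgroup M) =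
      Nat.card L1 * Nat.card (L1 ⊓ (L2 ⊓ L3) : AddSubgroup M) := by
  have hK := AddMonoidHom.card_perp_mul_card_of_ker_flip_eq_bot hq.ker_flip_pairing
    (L1 ⊔ L2 ⊓ L3)
  rw [hq.perp_sup_inf h1 h2 h3] at hK
  have hJ := AddSubgroup.card_sup_mul_card_inf L1 (L2 ⊓ L3)
  refine Nat.eq_of_mul_eq_mul_left (Nat.card_pos (α := L1)) ?_
  calc Nat.card L1 *
        (Nat.card (L1 ⊓ (L2 ⊔ L3) : AddSubgroup M) * Nat.card (L2 ⊓ L3 : AddSubgroup M))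
      = Nat.card (L1 ⊓ (L2 ⊔ L3) : AddSubgroup M) * Nat.card (L1 ⊔ L2 ⊓ L3 : AddSubgroup M) *
          Nat.card (L1 ⊓ (L2 ⊓ L3) : AddSubgroup M) := by rw [mul_assoc, hJ]; ring
    _ = Nat.card L1 * (Nat.card L1 * Nat.card (L1 ⊓ (L2 ⊓ L3) : AddSubgroup M)) := by
        rw [hK, ← h1.2]; ring

/-- For Lagrangian subgroups `L1, L2, L3` of a metric group,
`|L1| · |L1 ∩ L2| · |L2 ∩ L3| · |L1 ∩ L3|` is a perfect square
(equivalently, `d(L1,L2)·d(L2,L3) = d(L1,L3)` in `ℚ₊ˣ/(ℚ₊ˣ)²`). -/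
theorem stmt0 {M : Type*} [AddCommGroup M] [Fintype M] (q : M → ℂˣ)
    (hq : IsMetric q) (L1 L2 L3 : AddSubgroup M)
    (h1 : IsLagrangian q L1) (h2 : IsLagrangian q L2) (h3 : IsLagrangian q L3) :
    IsSquare (Nat.card L1 * Nat.card (L1 ⊓ L2 : AddSubgroup M) *
      Nat.card (L2 ⊓ L3 : AddSubgroup M) * Nat.card (L1 ⊓ L3 : AddSubgroup M)) := by
  obtain ⟨r, hr⟩ := hq.isSquare_relIndex h1 h2 h3
  have hRK := AddSubgroup.card_inf_mul_relIndex (L1 ⊓ L2 ⊔ L1 ⊓ L3) (L1 ⊓ (L2 ⊔ L3))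
  rw [inf_of_le_left (sup_le (inf_le_inf_left _ le_sup_left) (inf_le_inf_left _ le_sup_right)),
    hr] at hRK
  have hR := AddSubgroup.card_sup_mul_card_inf (L1 ⊓ L2) (L1 ⊓ L3)
  rw [← inf_inf_distrib_left] at hR
  have hK := hq.card_inf_sup_mul_card_inf h1 h2 h3
  set R := Nat.card (L1 ⊓ L2 ⊔ L1 ⊓ L3 : AddSubgroup M)
  set a23 := Nat.card (L2 ⊓ L3 : AddSubgroup M)
  refine ⟨r * (R * a23), ?_⟩
  linear_combination
    (Nat.card L1 * a23) * hR.symm + (R * a23) * hK.symm + (R * a23 * a23) * hRK.symm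
end

section
/- Let (M,q) be a metric group and let L1, L2, L3 be Lagrangian subgroups of M. Suppose x1, x1' ∈ L1 and x2, x2' ∈ L2 satisfy x1 + x2 = x1' + x2' and x1 + x2 ∈ L3, and suppose y1, y1' ∈ L1 and y2, y2' ∈ L2 satisfy y1 + y2 = y1' + y2' and y1 + y2 ∈ L3. Then b_q(x1, y2) = b_q(x1', y2'). (That is, the bicharacter c(x,y) := b_q(x1,y2) on (L1+L2) ∩ L3 is well defined, independently of the chosen decompositions x = x1 + x2, y = y1 + y2 with xi, yi ∈ Li.) -/
section

variable {M : Type*} [AddCommGroup M] {q : M → ℂˣ}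

lemma bq_eq_one_of_isotropic {L : AddSubgroup M} (hL : ∀ x ∈ L, q x = 1) {a b : M}
    (ha : a ∈ L) (hb : b ∈ L) : bq q a b = 1 := by
  simp [bq, hL a ha, hL b hb, hL _ (add_mem ha hb)]

lemma sub_mem_inf_of_add_eq_add {L L' : AddSubgroup M} {a a' b b' : M}
    (ha : a ∈ L) (ha' : a' ∈ L) (hb : b ∈ L') (hb' : b' ∈ L') (h : a + b = a' + b') :
    a - a' ∈ L ⊓ L' := by
  have hsub : a - a' = b' - b := sub_eq_sub_iff_add_eq_add.mpr (by rw [h, add_comm])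
  exact AddSubgroup.mem_inf.mpr ⟨sub_mem ha ha', hsub ▸ sub_mem hb' hb⟩

lemma bq_add_add (hq : IsMetric q) (a b c d : M) :
    bq q (a + b) (c + d) = bq q a c * bq q a d * (bq q b c * bq q b d) := by
  rw [hq.2.1, hq.2.2.1, hq.2.2.1]

lemma bq_add_add_of_mem_inf (hq : IsMetric q) {L1 L2 : AddSubgroup M}
    (h1 : ∀ x ∈ L1, q x = 1) (h2 : ∀ x ∈ L2, q x = 1) {a b d e : M}
    (ha : a ∈ L1) (hb : b ∈ L2) (hd : d ∈ L1 ⊓ L2) (he : e ∈ L1 ⊓ L2) :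
    bq q (a + d) (b + e) = bq q a b := by
  rw [bq_add_add hq, bq_eq_one_of_isotropic h1 ha he.1, bq_eq_one_of_isotropic h2 hd.2 hb,
    bq_eq_one_of_isotropic h1 hd.1 he.1]
  simp

end

theorem stmt2_general {M : Type*} [AddCommGroup M] (q : M → ℂˣ)
    (hq : IsMetric q) (L1 L2 : AddSubgroup M)
    (h1 : IsLagrangian q L1) (h2 : IsLagrangian q L2)
    (x1 x1' x2 x2' y1 y1' y2 y2' : M)
    (hx1 : x1 ∈ L1) (hx1' : x1' ∈ L1) (hx2 : x2 ∈ L2) (hx2' : x2' ∈ L2)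
    (hxeq : x1 + x2 = x1' + x2')
    (hy1 : y1 ∈ L1) (hy1' : y1' ∈ L1) (hy2 : y2 ∈ L2) (hy2' : y2' ∈ L2)
    (hyeq : y1 + y2 = y1' + y2') :
    bq q x1 y2 = bq q x1' y2' := by
  have hd : x1 - x1' ∈ L1 ⊓ L2 := sub_mem_inf_of_add_eq_add hx1 hx1' hx2 hx2' hxeq
  have he : y2 - y2' ∈ L1 ⊓ L2 := inf_comm L1 L2 ▸
    sub_mem_inf_of_add_eq_add hy2 hy2' hy1 hy1' (by rw [add_comm, hyeq, add_comm])
  calc bq q x1 y2 = bq q (x1' + (x1 - x1')) (y2' + (y2 - y2')) := by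
        rw [add_sub_cancel, add_sub_cancel]
    _ = bq q x1' y2' := bq_add_add_of_mem_inf hq h1.1 h2.1 hx1' hy2' hd he

/-- The bicharacter `c(x,y) = b_q(x1,y2)` on `(L1 + L2) ∩ L3` is well defined,
independently of the decompositions `x = x1 + x2`, `y = y1 + y2` with `xi, yi ∈ Li`. -/
theorem stmt2 {M : Type*} [AddCommGroup M] [Fintype M] (q : M → ℂˣ)
    (hq : IsMetric q) (L1 L2 L3 : AddSubgroup M)
    (h1 : IsLagrangian q L1) (h2 : IsLagrangian q L2) (h3 : IsLagrangian q L3)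
    (x1 x1' x2 x2' y1 y1' y2 y2' : M)
    (hx1 : x1 ∈ L1) (hx1' : x1' ∈ L1) (hx2 : x2 ∈ L2) (hx2' : x2' ∈ L2)
    (hxeq : x1 + x2 = x1' + x2') (hx3 : x1 + x2 ∈ L3)
    (hy1 : y1 ∈ L1) (hy1' : y1' ∈ L1) (hy2 : y2 ∈ L2) (hy2' : y2' ∈ L2)
    (hyeq : y1 + y2 = y1' + y2') (hy3 : y1 + y2 ∈ L3) :
    bq q x1 y2 = bq q x1' y2' :=
  stmt2_general q hq L1 L2 h1 h2 x1 x1' x2 x2' y1 y1' y2 y2' hx1 hx1' hx2 hx2' hxeq hy1 hy1' hy2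
    hy2' hyeq
end

section
/- Let (E1,q1), (E2,q2), (E3,q3) be metric groups. Let L be a Lagrangian subgroup of E1 ⊕ E2 with respect to the quadratic form (x1,x2) ↦ q1(x1)⁻¹·q2(x2), and let M be a Lagrangian subgroup of E2 ⊕ E3 with respect to (x2,x3) ↦ q2(x2)⁻¹·q3(x3). Define M∘L := {(a1,a3) ∈ E1 ⊕ E3 : ∃ a2 ∈ E2, (a1,a2) ∈ L and (a2,a3) ∈ M}. Then M∘L is a Lagrangian subgroup of E1 ⊕ E3 with respect to the quadratic form (x1,x3) ↦ q1(x1)⁻¹·q3(x3); in particular |M∘L|² = |E1|·|E3|. -/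
/-- Composition of Lagrangian correspondences (as a set). -/
def compL {E1 E2 E3 : Type*} [AddCommGroup E1] [AddCommGroup E2] [AddCommGroup E3]
    (L : AddSubgroup (E1 × E2)) (M : AddSubgroup (E2 × E3)) : Set (E1 × E3) :=
  {p | ∃ a2 : E2, (p.1, a2) ∈ L ∧ (a2, p.2) ∈ M}

/-!
Put `S = L × M` inside `(E1 × E2) × (E2 × E3)` and let `δ((a,b),(c,d)) = b - c`. Then `M∘L` is the
image of `S ∩ ker δ` under the outer projection `((a,b),(c,d)) ↦ (a,d)`, and the kernel of that
projection is a copy of `D = {d | (0,d) ∈ L, (d,0) ∈ M}`, so `|S| = |δ S|·|D|·|M∘L|`. A Lagrangian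
subgroup is its own `b_q`-orthogonal, which makes `D` the `b_{q2}`-orthogonal of `δ S`; as `b_{q2}`
is nondegenerate, `|D|·|δ S| = |E2|`. Hence `|M∘L|·|E2| = |L|·|M|`, and squaring gives
`|M∘L|² = |E1|·|E3|`. Isotropy is the identity `q1(a)⁻¹q3(c) = (q1(a)⁻¹q2(b))·(q2(b)⁻¹q3(c))`.
-/

open Function MonoidHom

theorem AddSubgroup.card_inf_ker_mul_card_map {G G' : Type*} [AddGroup G] [AddGroup G']
    (f : G →+ G') (S : AddSubgroup G) :
    Nat.card (S ⊓ f.ker : AddSubgroup G) * Nat.card (S.map f) = Nat.card S := by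
  rw [← relIndex_ker, ← relIndex_bot_left, ← relIndex_bot_left, inf_comm,
    relIndex_inf_mul_relIndex, bot_inf_eq]

theorem card_ker_domRestrictHom_comp_of_injective {G : Type*} [CommGroup G] [Finite G]
    {b : G →* G →* ℂˣ} (hb : Injective b) (H : Subgroup G) :
    Nat.card ((domRestrictHom H ℂˣ).comp b).ker = Nat.card (G ⧸ H) := by
  let e : G ≃* (G →* ℂˣ) := MulEquiv.ofBijective b <| (Nat.bijective_iff_injective_and_card b).mpr
    ⟨hb, (CommGroup.card_monoidHom_of_hasEnoughRootsOfUnity G ℂ).symm⟩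
  rw [← CommGroup.card_domRestrictHom_ker ℂ H, show b = e from rfl, ker_comp_mulEquiv,
    Subgroup.card_map_of_injective e.symm.injective]

namespace IsMetric

variable {E : Type*} [AddCommGroup E] {q : E → ℂˣ}

theorem bq_zero_left (hq : IsMetric q) (y : E) : bq q 0 y = 1 := by
  simpa using hq.2.1 0 0 y

theorem bq_zero_right (hq : IsMetric q) (x : E) : bq q x 0 = 1 := by
  simpa using hq.2.2.1 x 0 0

theorem bq_sub_right (hq : IsMetric q) (x y z : E) :
    bq q x (y - z) = bq q x y * (bq q x z)⁻¹ := by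
  rw [eq_mul_inv_iff_mul_eq, ← hq.2.2.1, sub_add_cancel]

def orthogonal (hq : IsMetric q) (H : AddSubgroup E) : AddSubgroup E where
  carrier := {x | ∀ y ∈ H, bq q x y = 1}
  zero_mem' y _ := hq.bq_zero_left y
  add_mem' {a c} ha hc y hy := by rw [hq.2.1, ha y hy, hc y hy, one_mul]
  neg_mem' {a} ha y hy := by
    have h := hq.2.1 (-a) a y
    rwa [neg_add_cancel, hq.bq_zero_left, ha y hy, mul_one, eq_comm] at h

@[simp]
theorem mem_orthogonal (hq : IsMetric q) {H : AddSubgroup E} {x : E} :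
    x ∈ hq.orthogonal H ↔ ∀ y ∈ H, bq q x y = 1 :=
  Iff.rfl

theorem card_orthogonal_mul_card [Finite E] (hq : IsMetric q) (H : AddSubgroup E) :
    Nat.card (hq.orthogonal H) * Nat.card H = Nat.card E := by
  let b : Multiplicative E →* Multiplicative E →* ℂˣ :=
    MonoidHom.mk' (fun x => MonoidHom.mk' (fun y => bq q x.toAdd y.toAdd) (hq.2.2.1 _))
      (fun _ _ => MonoidHom.ext (hq.2.1 _ _))
  have hb : Injective b := (injective_iff_map_eq_one b).mpr fun x hx =>
    hq.2.2.2 x.toAdd fun y => DFunLike.congr_fun hx (.ofAdd y)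
  have hker : (hq.orthogonal H).toSubgroup = ((domRestrictHom H.toSubgroup ℂˣ).comp b).ker := by
    ext x
    simp only [Multiplicative.mem_toSubgroup, mem_orthogonal, mem_ker, coe_comp, mk'_apply,
      Function.comp_apply, domRestrictHom_apply, domRestrict_eq_one_iff, Multiplicative.forall,
      toAdd_ofAdd, b]
    rfl
  calc Nat.card (hq.orthogonal H) * Nat.card H
      = Nat.card ((domRestrictHom H.toSubgroup ℂˣ).comp b).ker * Nat.card H.toSubgroup := by
        rw [← hker]
        rfl
    _ = Nat.card E := by
        rw [card_ker_domRestrictHom_comp_of_injective hb]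
        exact H.toSubgroup.card_eq_card_quotient_mul_card_subgroup.symm

theorem orthogonal_eq_of_isLagrangian [Finite E] (hq : IsMetric q) {L : AddSubgroup E}
    (hL : IsLagrangian q L) : hq.orthogonal L = L := by
  have hle : L ≤ hq.orthogonal L := fun x hx y hy => by
    rw [bq, hL.1 _ (L.add_mem hx hy), hL.1 x hx, hL.1 y hy, inv_one, one_mul, one_mul]
  have hcard : Nat.card (hq.orthogonal L) * Nat.card L = Nat.card L * Nat.card L := by
    rw [hq.card_orthogonal_mul_card, ← sq, hL.2]
  exact (AddSubgroup.eq_of_le_of_card_ge hle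
    (Nat.eq_of_mul_eq_mul_right Nat.card_pos hcard).le).symm

end IsMetric

def invSum {A B : Type*} (qa : A → ℂˣ) (qb : B → ℂˣ) (p : A × B) : ℂˣ :=
  (qa p.1)⁻¹ * qb p.2

section InvSum

variable {A B : Type*} [AddCommGroup A] [AddCommGroup B] {qa : A → ℂˣ} {qb : B → ℂˣ}

theorem bq_invSum (p p' : A × B) :
    bq (invSum qa qb) p p' = (bq qa p.1 p'.1)⁻¹ * bq qb p.2 p'.2 := by
  simp only [bq, invSum, Prod.fst_add, Prod.snd_add, mul_inv, inv_inv, mul_assoc, mul_comm,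
    mul_left_comm]

theorem IsMetric.invSum (ha : IsMetric qa) (hb : IsMetric qb) : IsMetric (invSum qa qb) := by
  refine ⟨fun p => ?_, fun x y z => ?_, fun x y z => ?_, fun x hx => ?_⟩
  · simp only [_root_.invSum, Prod.fst_neg, Prod.snd_neg, ha.1, hb.1]
  · simp only [bq_invSum, Prod.fst_add, Prod.snd_add, ha.2.1, hb.2.1, mul_inv]
    ac_rfl
  · simp only [bq_invSum, Prod.fst_add, Prod.snd_add, ha.2.2.1, hb.2.2.1, mul_inv]
    ac_rfl
  · refine Prod.ext (ha.2.2.2 _ fun y => ?_) (hb.2.2.2 _ fun y => ?_)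
    · simpa [bq_invSum, hb.bq_zero_right] using hx (y, 0)
    · simpa [bq_invSum, ha.bq_zero_right] using hx (0, y)

variable [Finite A] [Finite B] {L : AddSubgroup (A × B)}

theorem zero_mk_mem_iff_of_isLagrangian (ha : IsMetric qa) (hb : IsMetric qb)
    (hL : IsLagrangian (invSum qa qb) L) {x : B} : (0, x) ∈ L ↔ ∀ p ∈ L, bq qb x p.2 = 1 := by
  conv_lhs => rw [← (ha.invSum hb).orthogonal_eq_of_isLagrangian hL]
  simp [bq_invSum, ha.bq_zero_left]

theorem mk_zero_mem_iff_of_isLagrangian (ha : IsMetric qa) (hb : IsMetric qb)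
    (hL : IsLagrangian (invSum qa qb) L) {x : A} : (x, 0) ∈ L ↔ ∀ p ∈ L, bq qa x p.1 = 1 := by
  conv_lhs => rw [← (ha.invSum hb).orthogonal_eq_of_isLagrangian hL]
  simp [bq_invSum, hb.bq_zero_left]

end InvSum

section Composition

variable {E1 E2 E3 : Type*} [AddCommGroup E1] [AddCommGroup E2] [AddCommGroup E3]

variable (E1 E2 E3) in
def middleGap : (E1 × E2) × (E2 × E3) →+ E2 :=
  (AddMonoidHom.snd E1 E2).coprod (-AddMonoidHom.fst E2 E3)

variable (E1 E2 E3) in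
def middleDiag : E2 →+ (E1 × E2) × (E2 × E3) :=
  (AddMonoidHom.inr E1 E2).prod (AddMonoidHom.inl E2 E3)

variable (E1 E2 E3) in
def outerProj : (E1 × E2) × (E2 × E3) →+ E1 × E3 :=
  (AddMonoidHom.fst E1 E2).prodMap (AddMonoidHom.snd E2 E3)

@[simp]
theorem middleGap_apply (w : (E1 × E2) × (E2 × E3)) : middleGap E1 E2 E3 w = w.1.2 - w.2.1 :=
  (sub_eq_add_neg _ _).symm

variable (L : AddSubgroup (E1 × E2)) (M : AddSubgroup (E2 × E3))

def compSubgroup : AddSubgroup (E1 × E3) :=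
  (L.prod M ⊓ (middleGap E1 E2 E3).ker).map (outerProj E1 E2 E3)

theorem coe_compSubgroup : (compSubgroup L M : Set (E1 × E3)) = compL L M := by
  ext ⟨a, c⟩
  simp [compSubgroup, outerProj, compL, AddSubgroup.mem_prod, sub_eq_zero]

theorem mem_comap_middleDiag {x : E2} :
    x ∈ (L.prod M).comap (middleDiag E1 E2 E3) ↔ (0, x) ∈ L ∧ (x, 0) ∈ M := by
  simp [middleDiag, AddSubgroup.mem_prod]

theorem inf_ker_outerProj_eq_map_middleDiag :
    L.prod M ⊓ (middleGap E1 E2 E3).ker ⊓ (outerProj E1 E2 E3).ker =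
      ((L.prod M).comap (middleDiag E1 E2 E3)).map (middleDiag E1 E2 E3) := by
  ext ⟨⟨a, b⟩, ⟨c, d⟩⟩
  constructor
  · rintro ⟨⟨hLM, hgap⟩, hproj⟩
    obtain ⟨rfl, rfl⟩ : a = 0 ∧ d = 0 := by simpa [outerProj] using hproj
    obtain rfl : b = c := by simpa [sub_eq_zero] using hgap
    exact ⟨b, hLM, rfl⟩
  · rintro ⟨x, hx, hxw⟩
    rw [← hxw]
    exact ⟨⟨hx, by simp [middleDiag]⟩, by simp [middleDiag, outerProj]⟩

theorem card_compSubgroup_mul :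
    Nat.card (compSubgroup L M) * Nat.card ((L.prod M).comap (middleDiag E1 E2 E3)) *
      Nat.card ((L.prod M).map (middleGap E1 E2 E3)) = Nat.card L * Nat.card M := by
  have hdiag : Injective (middleDiag E1 E2 E3) := fun x y h => congrArg (fun w => w.2.1) h
  rw [← AddSubgroup.card_map_of_injective hdiag, ← inf_ker_outerProj_eq_map_middleDiag,
    mul_comm (Nat.card (compSubgroup L M)), compSubgroup, AddSubgroup.card_inf_ker_mul_card_map,
    AddSubgroup.card_inf_ker_mul_card_map]
  exact Nat.card_congr (L.prodEquiv M).toEquiv |>.trans (Nat.card_prod _ _)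

variable {q1 : E1 → ℂˣ} {q2 : E2 → ℂˣ} {q3 : E3 → ℂˣ} {L M}

theorem invSum_eq_one_of_mem_compL (hL : ∀ x ∈ L, invSum q1 q2 x = 1)
    (hM : ∀ x ∈ M, invSum q2 q3 x = 1) {p : E1 × E3} (hp : p ∈ compL L M) :
    invSum q1 q3 p = 1 := by
  obtain ⟨b, hl, hm⟩ := hp
  calc invSum q1 q3 p = invSum q1 q2 (p.1, b) * invSum q2 q3 (b, p.2) := by
        simp [invSum, mul_assoc]
    _ = 1 := by rw [hL _ hl, hM _ hm, one_mul]

variable [Finite E1] [Finite E2] [Finite E3]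

theorem comap_middleDiag_eq_orthogonal (h1 : IsMetric q1) (h2 : IsMetric q2) (h3 : IsMetric q3)
    (hL : IsLagrangian (invSum q1 q2) L) (hM : IsLagrangian (invSum q2 q3) M) :
    (L.prod M).comap (middleDiag E1 E2 E3) =
      h2.orthogonal ((L.prod M).map (middleGap E1 E2 E3)) := by
  ext x
  rw [mem_comap_middleDiag, zero_mk_mem_iff_of_isLagrangian h1 h2 hL,
    mk_zero_mem_iff_of_isLagrangian h2 h3 hM, h2.mem_orthogonal]
  constructor
  · rintro ⟨hxL, hxM⟩ _ ⟨⟨l, m⟩, ⟨hl, hm⟩, rfl⟩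
    rw [middleGap_apply, h2.bq_sub_right, hxL l hl, hxM m hm, inv_one, mul_one]
  · intro hx
    refine ⟨fun l hl => ?_, fun m hm => ?_⟩
    · simpa [h2.bq_zero_right] using hx _ ⟨(l, 0), ⟨hl, M.zero_mem⟩, rfl⟩
    · have h := hx _ ⟨(0, m), ⟨L.zero_mem, hm⟩, rfl⟩
      rwa [middleGap_apply, Prod.snd_zero, h2.bq_sub_right, h2.bq_zero_right, one_mul,
        inv_eq_one] at h

theorem card_compSubgroup_sq (h1 : IsMetric q1) (h2 : IsMetric q2) (h3 : IsMetric q3)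
    (hL : IsLagrangian (invSum q1 q2) L) (hM : IsLagrangian (invSum q2 q3) M) :
    Nat.card (compSubgroup L M) ^ 2 = Nat.card E1 * Nat.card E3 := by
  have hK : Nat.card (compSubgroup L M) * Nat.card E2 = Nat.card L * Nat.card M := by
    rw [← h2.card_orthogonal_mul_card, ← comap_middleDiag_eq_orthogonal h1 h2 h3 hL hM,
      ← mul_assoc, card_compSubgroup_mul]
  have hsq : Nat.card (compSubgroup L M) ^ 2 * Nat.card E2 ^ 2 =
      Nat.card E1 * Nat.card E3 * Nat.card E2 ^ 2 := by
    rw [← mul_pow, hK, mul_pow, hL.2, hM.2, Nat.card_prod, Nat.card_prod]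
    ring
  exact Nat.eq_of_mul_eq_mul_right (pow_pos Nat.card_pos 2) hsq

end Composition

/-- The composition `M∘L` of Lagrangian correspondences is a Lagrangian subgroup of
`E1 ⊕ E3` for the form `(x1,x3) ↦ q1(x1)⁻¹·q3(x3)`; in particular `|M∘L|² = |E1|·|E3|`. -/
theorem stmt7 {E1 E2 E3 : Type*} [AddCommGroup E1] [Fintype E1]
    [AddCommGroup E2] [Fintype E2] [AddCommGroup E3] [Fintype E3]
    (q1 : E1 → ℂˣ) (q2 : E2 → ℂˣ) (q3 : E3 → ℂˣ)
    (h1 : IsMetric q1) (h2 : IsMetric q2) (h3 : IsMetric q3)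
    (L : AddSubgroup (E1 × E2)) (M : AddSubgroup (E2 × E3))
    (hL : IsLagrangian (fun p : E1 × E2 => (q1 p.1)⁻¹ * q2 p.2) L)
    (hM : IsLagrangian (fun p : E2 × E3 => (q2 p.1)⁻¹ * q3 p.2) M) :
    ∃ K : AddSubgroup (E1 × E3), (K : Set (E1 × E3)) = compL L M ∧
      IsLagrangian (fun p : E1 × E3 => (q1 p.1)⁻¹ * q3 p.2) K ∧
      Nat.card K ^ 2 = Nat.card E1 * Nat.card E3 := by
  have hcard := card_compSubgroup_sq (L := L) (M := M) h1 h2 h3 hL hM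
  refine ⟨compSubgroup L M, coe_compSubgroup L M, ⟨fun p hp => ?_, ?_⟩, hcard⟩
  · exact invSum_eq_one_of_mem_compL hL.1 hM.1 (coe_compSubgroup L M ▸ hp)
  · rw [hcard, Nat.card_prod]
end

section
/- Let (E1,q1), (E2,q2), (E3,q3) be metric groups, let L be a Lagrangian subgroup of (E1 ⊕ E2, q1⁻¹ ⊕ q2) and let M be a Lagrangian subgroup of (E2 ⊕ E3, q2⁻¹ ⊕ q3). Then for every (a1,a3) ∈ M∘L, the number of elements a2 ∈ E2 with (a1,a2) ∈ L and (a2,a3) ∈ M equals |{a2 ∈ E2 : (0,a2) ∈ L and (a2,0) ∈ M}|; in particular this fiber count is independent of the point (a1,a3) ∈ M∘L. -/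
section MiddleFiber

variable {E1 E2 E3 : Type*} [AddGroup E1] [AddGroup E2] [AddGroup E3]
  {L : AddSubgroup (E1 × E2)} {M : AddSubgroup (E2 × E3)}

theorem mem_middle_fiber_iff_sub_mem_middle_fiber_zero {a1 : E1} {a3 : E3} {b : E2}
    (hbL : (a1, b) ∈ L) (hbM : (b, a3) ∈ M) (a2 : E2) :
    (a1, a2) ∈ L ∧ (a2, a3) ∈ M ↔ ((0 : E1), a2 - b) ∈ L ∧ (a2 - b, (0 : E3)) ∈ M := by
  have hL := L.add_mem_cancel_right (y := (a1, a2)) (L.neg_mem hbL)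
  have hM := M.add_mem_cancel_right (y := (a2, a3)) (M.neg_mem hbM)
  simp only [← sub_eq_add_neg, Prod.mk_sub_mk, sub_self] at hL hM
  rw [hL, hM]

theorem card_middle_fiber_eq_card_middle_fiber_zero {a1 : E1} {a3 : E3} {b : E2}
    (hbL : (a1, b) ∈ L) (hbM : (b, a3) ∈ M) :
    Nat.card {a2 : E2 // (a1, a2) ∈ L ∧ (a2, a3) ∈ M} =
      Nat.card {a2 : E2 // ((0 : E1), a2) ∈ L ∧ (a2, (0 : E3)) ∈ M} :=
  Nat.card_congr <|
    (Equiv.subRight b).subtypeEquiv (mem_middle_fiber_iff_sub_mem_middle_fiber_zero hbL hbM)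

end MiddleFiber

theorem stmt9_general {E1 E2 E3 : Type*} [AddCommGroup E1]
    [AddCommGroup E2] [AddCommGroup E3]
    (L : AddSubgroup (E1 × E2)) (M : AddSubgroup (E2 × E3)) :
    ∀ p : E1 × E3, p ∈ compL L M →
      Nat.card {a2 : E2 // (p.1, a2) ∈ L ∧ (a2, p.2) ∈ M} =
        Nat.card {a2 : E2 // ((0 : E1), a2) ∈ L ∧ (a2, (0 : E3)) ∈ M} :=
  fun _ ⟨_, hbL, hbM⟩ => card_middle_fiber_eq_card_middle_fiber_zero hbL hbM

/-- For every point of `M∘L` the fiber count of middle elements `a2` is the same,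
namely the fiber over `(0,0)`. -/
theorem stmt9 {E1 E2 E3 : Type*} [AddCommGroup E1] [Fintype E1]
    [AddCommGroup E2] [Fintype E2] [AddCommGroup E3] [Fintype E3]
    (q1 : E1 → ℂˣ) (q2 : E2 → ℂˣ) (q3 : E3 → ℂˣ)
    (h1 : IsMetric q1) (h2 : IsMetric q2) (h3 : IsMetric q3)
    (L : AddSubgroup (E1 × E2)) (M : AddSubgroup (E2 × E3))
    (hL : IsLagrangian (fun p : E1 × E2 => (q1 p.1)⁻¹ * q2 p.2) L)
    (hM : IsLagrangian (fun p : E2 × E3 => (q2 p.1)⁻¹ * q3 p.2) M) :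
    ∀ p : E1 × E3, p ∈ compL L M →
      Nat.card {a2 : E2 // (p.1, a2) ∈ L ∧ (a2, p.2) ∈ M} =
        Nat.card {a2 : E2 // ((0 : E1), a2) ∈ L ∧ (a2, (0 : E3)) ∈ M} :=
  stmt9_general L M
end

section
/- Let (E,q) and (E',q') be metric groups and let L be a Lagrangian subgroup of E ⊕ E' with respect to the quadratic form (x,x') ↦ q(x)⁻¹·q'(x'). Suppose L ∩ (E ⊕ 0) = {0} and L ∩ (0 ⊕ E') = {0}. Then |E| = |E'| and there exists an isometry g : (E,q) → (E',q') (an additive isomorphism with q'(g(x)) = q(x) for all x) such that L = {(x, g(x)) : x ∈ E}. -/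
/-!
Both projections restrict to injections on `L`, because `L` meets both factors trivially, so
`|L| ≤ |E|` and `|L| ≤ |E'|`; together with `|L|² = |E|·|E'|` this forces both to be bijections.
By Goursat's lemma `L` is then the graph of an additive isomorphism `g`, and `q(x)⁻¹ q'(g x) = 1`
on the graph says that `g` is an isometry.
-/

open Function

theorem Nat.eq_and_eq_of_sq_eq_mul {l a b : ℕ} (ha : 0 < a) (hb : 0 < b) (hla : l ≤ a)
    (hlb : l ≤ b) (h : l ^ 2 = a * b) : l = a ∧ l = b := by
  constructor <;> nlinarith

namespace AddSubgroup

variable {M N : Type*} [AddCommGroup M] [AddCommGroup N] (L : AddSubgroup (M × N))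

theorem injective_fst_comp_subtype (hN : ∀ y : N, ((0 : M), y) ∈ L → y = 0) :
    Injective (Prod.fst ∘ L.subtype) := by
  refine (injective_iff_map_eq_zero ((AddMonoidHom.fst M N).comp L.subtype)).2 ?_
  rintro ⟨⟨x, y⟩, hp⟩ (rfl : x = 0)
  simp [hN y hp]

theorem injective_snd_comp_subtype (hM : ∀ x : M, (x, (0 : N)) ∈ L → x = 0) :
    Injective (Prod.snd ∘ L.subtype) := by
  refine (injective_iff_map_eq_zero ((AddMonoidHom.snd M N).comp L.subtype)).2 ?_
  rintro ⟨⟨x, y⟩, hp⟩ (rfl : y = 0)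
  simp [hM x hp]

theorem exists_addEquiv_eq_graph_of_card_sq [Finite M] [Finite N]
    (hcard : Nat.card L ^ 2 = Nat.card (M × N))
    (hM : ∀ x : M, (x, (0 : N)) ∈ L → x = 0) (hN : ∀ y : N, ((0 : M), y) ∈ L → y = 0) :
    ∃ e : M ≃+ N, L = e.toAddMonoidHom.graph := by
  have h₁ := L.injective_fst_comp_subtype hN
  have h₂ := L.injective_snd_comp_subtype hM
  obtain ⟨hLM, hLN⟩ := Nat.eq_and_eq_of_sq_eq_mul Nat.card_pos Nat.card_pos
    (Nat.card_le_card_of_injective _ h₁) (Nat.card_le_card_of_injective _ h₂)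
    (hcard.trans (Nat.card_prod M N))
  exact exists_addEquiv_eq_graph ((Nat.bijective_iff_injective_and_card _).2 ⟨h₁, hLM⟩)
    ((Nat.bijective_iff_injective_and_card _).2 ⟨h₂, hLN⟩)

end AddSubgroup

theorem stmt13_general {E E' : Type*} [AddCommGroup E] [Fintype E]
    [AddCommGroup E'] [Fintype E'] (q : E → ℂˣ) (q' : E' → ℂˣ)
    (L : AddSubgroup (E × E'))
    (hL : IsLagrangian (fun p : E × E' => (q p.1)⁻¹ * q' p.2) L)
    (hE : ∀ x : E, (x, (0 : E')) ∈ L → x = 0)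
    (hE' : ∀ y : E', ((0 : E), y) ∈ L → y = 0) :
    Nat.card E = Nat.card E' ∧
      ∃ g : E ≃+ E', (∀ x, q' (g x) = q x) ∧
        (L : Set (E × E')) = {p : E × E' | p.2 = g p.1} := by
  obtain ⟨g, rfl⟩ := L.exists_addEquiv_eq_graph_of_card_sq hL.2 hE hE'
  exact ⟨Nat.card_congr g.toEquiv, g, fun x => (inv_mul_eq_one.1 (hL.1 (x, g x) rfl)).symm,
    Set.ext fun _ => eq_comm⟩

/-- A Lagrangian subgroup of `E ⊕ E'` meeting both factors trivially is the graph of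
an isometry `g : (E,q) → (E',q')`; in particular `|E| = |E'|`. -/
theorem stmt13 {E E' : Type*} [AddCommGroup E] [Fintype E]
    [AddCommGroup E'] [Fintype E'] (q : E → ℂˣ) (q' : E' → ℂˣ)
    (hq : IsMetric q) (hq' : IsMetric q')
    (L : AddSubgroup (E × E'))
    (hL : IsLagrangian (fun p : E × E' => (q p.1)⁻¹ * q' p.2) L)
    (hE : ∀ x : E, (x, (0 : E')) ∈ L → x = 0)
    (hE' : ∀ y : E', ((0 : E), y) ∈ L → y = 0) :
    Nat.card E = Nat.card E' ∧
      ∃ g : E ≃+ E', (∀ x, q' (g x) = q x) ∧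
        (L : Set (E × E')) = {p : E × E' | p.2 = g p.1} :=
  stmt13_general q q' L hL hE hE'
end

section
/- Let A be a finite abelian group, A* := Hom(A, ℂˣ), and let q(a,f) := f(a) be the hyperbolic quadratic form on A ⊕ A*. Then the map τ sending a pair (H,ψ) — where H ≤ A is a subgroup and ψ is a skew-symmetric bicharacter of H — to τ(H,ψ) := {(h,z) ∈ A ⊕ A* : h ∈ H and z(h') = ψ(h,h') for all h' ∈ H} is a bijection from the set of such pairs onto the set of Lagrangian subgroups of (A ⊕ A*, q). -/
/-- The character group `A* = Hom(A, ℂˣ)` of a finite abelian group, written additively. -/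
abbrev Adual (A : Type*) [AddCommGroup A] : Type _ := Additive (AddChar A ℂˣ)

/-- The hyperbolic quadratic form `q(a,f) = f(a)` on `A ⊕ A*`. -/
def hypQ (A : Type*) [AddCommGroup A] : A × Adual A → ℂˣ :=
  fun p => (Additive.toMul p.2) p.1

/-- The subset `τ(H,ψ) = {(h,z) : h ∈ H, z|_H = ψ(h,·)}` of `A ⊕ A*`. -/
def tauSet {A : Type*} [AddCommGroup A] (H : AddSubgroup A) (ψ : ↥H → ↥H → ℂˣ) :
    Set (A × Adual A) :=
  {p | ∃ hm : p.1 ∈ H, ∀ h' : H, (Additive.toMul p.2) (h' : A) = ψ ⟨p.1, hm⟩ h'}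

/-- `ψ` is a skew-symmetric bicharacter on the subgroup `H`. -/
def IsSkewBichar {A : Type*} [AddCommGroup A] (H : AddSubgroup A)
    (ψ : ↥H → ↥H → ℂˣ) : Prop :=
  (∀ x y z : H, ψ (x + y) z = ψ x z * ψ y z) ∧
  (∀ x y z : H, ψ x (y + z) = ψ x y * ψ x z) ∧
  (∀ x : H, ψ x x = 1)

/-!
If `K ≤ A ⊕ A*` is isotropic and `(a, z), (a, z') ∈ K`, then `z` and `z'` agree on
`H := pr₁ K` (evaluate `q` at `(b, w) + (a, z) - (a, z')`). So `ψ(h, h') := z(h')` for any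
`(h, z) ∈ K` is a well-defined skew-symmetric bicharacter of `H`, and `K ⊆ τ(H, ψ)`.
For any `(H, ψ)`, since `ℂˣ` is divisible, characters of `H` extend to `A`; hence `τ(H, ψ)` maps onto
`H` with every fibre in bijection with the annihilator `H^⊥`, and `|τ(H, ψ)| = |H| |H^⊥| = |A|`.
Counting then forces `K = τ(H, ψ)` for a Lagrangian `K`, and the extension property shows that
`τ(H, ψ)` determines `H` and `ψ`.
-/

open Function

noncomputable instance : DivisibleBy (Additive ℂˣ) ℤ :=
  Surjective.divisibleBy (fun z : ℂ => Additive.ofMul (Units.mk0 _ (Complex.exp_ne_zero z)))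
    (fun u => ⟨Complex.log (Additive.toMul u : ℂˣ), by
      ext; exact Complex.exp_log (Additive.toMul u : ℂˣ).ne_zero⟩)
    (fun z n => by ext; simp [Complex.exp_int_mul])

namespace Adual

variable {A : Type*} [AddCommGroup A]

lemma ext_iff {z w : Adual A} : z = w ↔ ∀ a, Additive.toMul z a = Additive.toMul w a :=
  Additive.toMul.injective.eq_iff.symm.trans DFunLike.ext_iff

lemma ext {z w : Adual A} (h : ∀ a, Additive.toMul z a = Additive.toMul w a) : z = w :=
  ext_iff.2 h

def mk (f : A → ℂˣ) (hf : ∀ a b, f (a + b) = f a * f b) : Adual A :=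
  .ofMul (AddChar.toAddMonoidHomEquiv.symm (AddMonoidHom.mk' (fun a => .ofMul (f a)) hf))

def restrict (H : AddSubgroup A) : Adual A →+ Adual H where
  toFun z := .ofMul ((Additive.toMul z).compAddMonoidHom H.subtype)
  map_zero' := rfl
  map_add' _ _ := rfl

lemma restrict_surjective (H : AddSubgroup A) : Surjective (restrict H) := by
  intro w
  obtain ⟨Φ, hΦ⟩ :=
    (Module.Baer.of_divisible (Additive ℂˣ)).extension_property_addMonoidHom
      H.subtype H.subtype_injective (AddChar.toAddMonoidHomEquiv (Additive.toMul w))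
  exact ⟨.ofMul (AddChar.toAddMonoidHomEquiv.symm Φ),
    ext fun h => congrArg Additive.toMul (DFunLike.congr_fun hΦ h)⟩

lemma card_eq [Finite A] : Nat.card (Adual A) = Nat.card A :=
  (Nat.card_congr (Additive.toMul.trans AddChar.toMonoidHomEquiv)).trans
    (CommGroup.card_monoidHom_of_hasEnoughRootsOfUnity (Multiplicative A) ℂ)

instance [Finite A] : Finite (Adual A) :=
  Nat.finite_of_card_ne_zero (card_eq.trans_ne Nat.card_pos.ne')

/- `α` and `H` are pinned: the `AddZeroClass (Adual A)` instance in the type of `restrict` agrees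
with the one derived from `AddGroup (Adual A)` only after unfolding. -/
lemma card_preimage_restrict (H : AddSubgroup A) (w : Adual H) :
    Nat.card (restrict H ⁻¹' {w}) = Nat.card (restrict H ⁻¹' {0}) :=
  Nat.card_congr (AddMonoidHom.fiberEquivOfSurjective (α := Adual A) (H := Adual H)
    (restrict_surjective H) w 0)

lemma card_mul_card_preimage_restrict_zero [Finite A] (H : AddSubgroup A) :
    Nat.card H * Nat.card (restrict H ⁻¹' {0}) = Nat.card A := by
  have : Fintype (Adual H) := Fintype.ofFinite _
  rw [← card_eq (A := H), ← card_eq (A := A),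
    ← Nat.card_congr (Equiv.sigmaPreimageEquiv (restrict H)), Nat.card_sigma]
  simp only [card_preimage_restrict, Finset.sum_const, Finset.card_univ, smul_eq_mul,
    Nat.card_eq_fintype_card]

end Adual

def bicharHom {B : Type*} [AddCommGroup B] (ψ : B → B → ℂˣ)
    (hl : ∀ x y z, ψ (x + y) z = ψ x z * ψ y z)
    (hr : ∀ x y z, ψ x (y + z) = ψ x y * ψ x z) : B →+ Adual B :=
  AddMonoidHom.mk' (fun x => Adual.mk (ψ x) (hr x)) fun x y => Adual.ext (hl x y)

section Tau

variable {A : Type*} [AddCommGroup A] {H : AddSubgroup A} {ψ : H → H → ℂˣ}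

lemma mem_tauSet_iff (hl : ∀ x y z, ψ (x + y) z = ψ x z * ψ y z)
    (hr : ∀ x y z, ψ x (y + z) = ψ x y * ψ x z) {p : A × Adual A} :
    p ∈ tauSet H ψ ↔
      ∃ hm : p.1 ∈ H, Adual.restrict H p.2 = bicharHom ψ hl hr ⟨p.1, hm⟩ :=
  exists_congr fun _ => by rw [Adual.ext_iff]; rfl

variable (H ψ) in
def tauSubgroup (hl : ∀ x y z, ψ (x + y) z = ψ x z * ψ y z)
    (hr : ∀ x y z, ψ x (y + z) = ψ x y * ψ x z) : AddSubgroup (A × Adual A) where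
  carrier := tauSet H ψ
  zero_mem' := (mem_tauSet_iff hl hr).2 ⟨H.zero_mem, (map_zero (bicharHom ψ hl hr)).symm⟩
  add_mem' := by
    rintro p q hp hq
    obtain ⟨hp₁, hp₂⟩ := (mem_tauSet_iff hl hr).1 hp
    obtain ⟨hq₁, hq₂⟩ := (mem_tauSet_iff hl hr).1 hq
    refine (mem_tauSet_iff hl hr).2 ⟨H.add_mem hp₁ hq₁, ?_⟩
    rw [Prod.snd_add, map_add, hp₂, hq₂, ← map_add]
    rfl
  neg_mem' := by
    rintro p hp
    obtain ⟨hp₁, hp₂⟩ := (mem_tauSet_iff hl hr).1 hp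
    refine (mem_tauSet_iff hl hr).2 ⟨H.neg_mem hp₁, ?_⟩
    rw [Prod.snd_neg, map_neg, hp₂, ← map_neg]
    rfl

lemma card_tauSubgroup [Finite A] (hl : ∀ x y z, ψ (x + y) z = ψ x z * ψ y z)
    (hr : ∀ x y z, ψ x (y + z) = ψ x y * ψ x z) :
    Nat.card (tauSubgroup H ψ hl hr) = Nat.card A := by
  have : Fintype H := Fintype.ofFinite H
  let e : tauSubgroup H ψ hl hr ≃ Σ h : H, Adual.restrict H ⁻¹' {bicharHom ψ hl hr h} :=
    { toFun p := ⟨⟨p.1.1, p.2.1⟩, p.1.2, ((mem_tauSet_iff hl hr).1 p.2).2⟩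
      invFun q := ⟨(q.1, q.2.1), (mem_tauSet_iff hl hr).2 ⟨q.1.2, q.2.2⟩⟩
      left_inv _ := rfl
      right_inv _ := rfl }
  rw [Nat.card_congr e, Nat.card_sigma, ← Adual.card_mul_card_preimage_restrict_zero H]
  simp only [Adual.card_preimage_restrict, Finset.sum_const, Finset.card_univ, smul_eq_mul,
    Nat.card_eq_fintype_card]

lemma hypQ_eq_one_of_mem_tauSet (hψ : ∀ x, ψ x x = 1) {p : A × Adual A}
    (hp : p ∈ tauSet H ψ) : hypQ A p = 1 :=
  (hp.2 ⟨p.1, hp.1⟩).trans (hψ _)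

lemma exists_mem_tauSet (hr : ∀ x y z, ψ x (y + z) = ψ x y * ψ x z) (x : H) :
    ∃ z : Adual A, ((x : A), z) ∈ tauSet H ψ := by
  obtain ⟨z, hz⟩ := Adual.restrict_surjective H (Adual.mk (ψ x) (hr x))
  exact ⟨z, x.2, fun h => congrArg (fun w : Adual H => Additive.toMul w h) hz⟩

lemma le_of_tauSet_subset {H' : AddSubgroup A} {ψ' : H' → H' → ℂˣ}
    (hr : ∀ x y z, ψ x (y + z) = ψ x y * ψ x z) (h : tauSet H ψ ⊆ tauSet H' ψ') :
    H ≤ H' :=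
  fun a ha => (h (exists_mem_tauSet hr ⟨a, ha⟩).choose_spec).1

lemma sigma_eq_of_tauSet_eq {H' : AddSubgroup A} {ψ' : H' → H' → ℂˣ}
    (hr : ∀ x y z, ψ x (y + z) = ψ x y * ψ x z)
    (hr' : ∀ x y z, ψ' x (y + z) = ψ' x y * ψ' x z) (h : tauSet H ψ = tauSet H' ψ') :
    (⟨H, ψ⟩ : Σ H : AddSubgroup A, H → H → ℂˣ) = ⟨H', ψ'⟩ := by
  obtain rfl := le_antisymm (le_of_tauSet_subset hr h.le) (le_of_tauSet_subset hr' h.ge)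
  refine Sigma.ext rfl (heq_of_eq (funext₂ fun x y => ?_))
  obtain ⟨z, hz⟩ := exists_mem_tauSet hr x
  exact (hz.2 y).symm.trans ((h ▸ hz).2 y)

end Tau

section Isotropic

variable {A : Type*} [AddCommGroup A] {K : AddSubgroup (A × Adual A)}

lemma toMul_apply_eq_of_isotropic (hK : ∀ x ∈ K, hypQ A x = 1) {a b : A} {z z' w : Adual A}
    (hz : (a, z) ∈ K) (hz' : (a, z') ∈ K) (hw : (b, w) ∈ K) :
    Additive.toMul z b = Additive.toMul z' b := by
  have h₁ := hK _ (K.add_mem hw (K.sub_mem hz hz'))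
  have h₂ := hK _ hw
  simp only [hypQ] at h₁ h₂
  rwa [Prod.snd_add, Prod.fst_add, Prod.snd_sub, Prod.fst_sub, sub_self, add_zero, toMul_add,
    toMul_sub, AddChar.mul_apply, h₂, one_mul, AddChar.div_apply', div_eq_one] at h₁

lemma exists_isSkewBichar_subset_tauSet (hK : ∀ x ∈ K, hypQ A x = 1) :
    ∃ (H : AddSubgroup A) (ψ : H → H → ℂˣ),
      IsSkewBichar H ψ ∧ (K : Set (A × Adual A)) ⊆ tauSet H ψ := by
  let H : AddSubgroup A := K.map (AddMonoidHom.fst A (Adual A))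
  have hH (h : H) : ∃ z, ((h : A), z) ∈ K := by
    obtain ⟨p, hp, hph⟩ := h.2
    exact ⟨p.2, hph ▸ hp⟩
  choose zf hzf using hH
  refine ⟨H, fun x y => Additive.toMul (zf x) y,
    ⟨fun x y u => ?_, fun x y u => ?_, fun x => hK _ (hzf x)⟩, ?_⟩
  · calc Additive.toMul (zf (x + y)) u = Additive.toMul (zf x + zf y) u :=
          toMul_apply_eq_of_isotropic hK (hzf _) (K.add_mem (hzf x) (hzf y)) (hzf u)
      _ = _ := by rw [toMul_add, AddChar.mul_apply]
  · exact AddChar.map_add_eq_mul _ _ _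
  · rintro ⟨a, z⟩ hp
    have ha : a ∈ H := ⟨(a, z), hp, rfl⟩
    exact ⟨ha, fun h' => toMul_apply_eq_of_isotropic hK hp (hzf ⟨a, ha⟩) (hzf h')⟩

end Isotropic

lemma card_prod_adual (A : Type*) [AddCommGroup A] [Finite A] :
    Nat.card (A × Adual A) = Nat.card A ^ 2 := by
  rw [Nat.card_prod, Adual.card_eq, sq]

/-- The assignment `(H,ψ) ↦ τ(H,ψ)` is a bijection between pairs (a subgroup of `A` with
a skew-symmetric bicharacter on it) and Lagrangian subgroups of `(A ⊕ A*, q)`. -/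
theorem stmt15 {A : Type*} [AddCommGroup A] [Fintype A] :
    Function.Injective
        (fun p : {p : Σ H : AddSubgroup A, (↥H → ↥H → ℂˣ) // IsSkewBichar p.1 p.2} =>
          tauSet p.1.1 p.1.2) ∧
      Set.range
          (fun p : {p : Σ H : AddSubgroup A, (↥H → ↥H → ℂˣ) // IsSkewBichar p.1 p.2} =>
            tauSet p.1.1 p.1.2) =
        {S : Set (A × Adual A) | ∃ K : AddSubgroup (A × Adual A),
          (K : Set (A × Adual A)) = S ∧ (∀ x ∈ K, hypQ A x = 1) ∧
          Nat.card K ^ 2 = Nat.card (A × Adual A)} := by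
  refine ⟨fun ⟨⟨_, _⟩, hψ⟩ ⟨⟨_, _⟩, hψ'⟩ h =>
    Subtype.ext (sigma_eq_of_tauSet_eq hψ.2.1 hψ'.2.1 h), ?_⟩
  ext S
  constructor
  · rintro ⟨⟨⟨H, ψ⟩, hψ⟩, rfl⟩
    refine ⟨tauSubgroup H ψ hψ.1 hψ.2.1, rfl, fun p => hypQ_eq_one_of_mem_tauSet hψ.2.2, ?_⟩
    rw [card_tauSubgroup, card_prod_adual]
  · rintro ⟨K, rfl, hK, hcard⟩
    obtain ⟨H, ψ, hψ, hKτ⟩ := exists_isSkewBichar_subset_tauSet hK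
    have hcardK : Nat.card K = Nat.card A :=
      Nat.pow_left_injective two_ne_zero (hcard.trans (card_prod_adual A))
    have hK_eq : K = tauSubgroup H ψ hψ.1 hψ.2.1 :=
      AddSubgroup.eq_of_le_of_card_ge hKτ (by rw [hcardK, card_tauSubgroup])
    exact ⟨⟨⟨H, ψ⟩, hψ⟩, by rw [hK_eq]; rfl⟩
end

section
/- Let N be a finite group and let ω : N × N × N → ℂˣ be a 3-cocycle, i.e., ω(b,c,d)·ω(a,bc,d)·ω(a,b,c) = ω(ab,c,d)·ω(a,b,cd) for all a,b,c,d ∈ N. Then for every central element z ∈ Z(N), the function c_z(a,b) := ω(z,a,b)·ω(a,b,z)·ω(a,z,b)⁻¹ is a 2-cocycle of N with values in ℂˣ (with trivial action), i.e., c_z(a,b)·c_z(ab,c) = c_z(b,c)·c_z(a,bc) for all a,b,c ∈ N. -/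
/-!
Write `δω(a,b,c,d)` for the ratio of the two sides of the 3-cocycle identity and `∂c(a,b,c)` for
that of the 2-cocycle identity. When `z` commutes with everything, `∂c_z(a,b,c)` equals
`δω(z,a,b,c) · δω(a,b,z,c) / (δω(a,z,b,c) · δω(a,b,c,z))`: after moving `z` past its neighbours,
every other factor cancels. So `δω = 1` forces `∂c_z = 1`.
-/

section Slant

variable {G M : Type*} [Mul G] [CommGroup M]

def threeCoboundary (ω : G → G → G → M) (a b c d : G) : M :=
  ω b c d * ω a (b * c) d * ω a b c / (ω (a * b) c d * ω a b (c * d))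

def twoCoboundary (f : G → G → M) (a b c : G) : M :=
  f a b * f (a * b) c / (f b c * f a (b * c))

def slant (ω : G → G → G → M) (z a b : G) : M :=
  ω z a b * ω a b z * (ω a z b)⁻¹

theorem twoCoboundary_slant (ω : G → G → G → M) {z : G} (hz : ∀ g, z * g = g * z)
    (a b c : G) :
    twoCoboundary (slant ω z) a b c =
      threeCoboundary ω z a b c * threeCoboundary ω a b z c /
        (threeCoboundary ω a z b c * threeCoboundary ω a b c z) := by
  simp only [twoCoboundary, slant, threeCoboundary, hz]
  apply Additive.ofMul.injective
  simp only [ofMul_mul, ofMul_div, ofMul_inv]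
  abel

end Slant

theorem stmt19_general {N : Type*} [Group N] (ω : N → N → N → ℂˣ)
    (hω : ∀ a b c d : N,
      ω b c d * ω a (b * c) d * ω a b c = ω (a * b) c d * ω a b (c * d))
    (z : N) (hz : z ∈ Subgroup.center N) :
    ∀ a b c : N,
      (ω z a b * ω a b z * (ω a z b)⁻¹) *
          (ω z (a * b) c * ω (a * b) c z * (ω (a * b) z c)⁻¹) =
        (ω z b c * ω b c z * (ω b z c)⁻¹) *
          (ω z a (b * c) * ω a (b * c) z * (ω a z (b * c))⁻¹) := by
  intro a b c
  have hδ : ∀ a b c d : N, threeCoboundary ω a b c d = 1 := fun a b c d =>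
    div_eq_one.mpr (hω a b c d)
  have hcocycle := twoCoboundary_slant ω (fun g => (Subgroup.mem_center_iff.mp hz g).symm) a b c
  simp only [hδ, mul_one, div_one] at hcocycle
  exact div_eq_one.mp hcocycle

/-- For a 3-cocycle `ω` on a finite group `N` with values in `ℂˣ` and a central element
`z ∈ Z(N)`, the function `c_z(a,b) = ω(z,a,b)·ω(a,b,z)·ω(a,z,b)⁻¹` is a 2-cocycle. -/
theorem stmt19 {N : Type*} [Group N] [Fintype N] (ω : N → N → N → ℂˣ)
    (hω : ∀ a b c d : N,
      ω b c d * ω a (b * c) d * ω a b c = ω (a * b) c d * ω a b (c * d))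
    (z : N) (hz : z ∈ Subgroup.center N) :
    ∀ a b c : N,
      (ω z a b * ω a b z * (ω a z b)⁻¹) *
          (ω z (a * b) c * ω (a * b) c z * (ω (a * b) z c)⁻¹) =
        (ω z b c * ω b c z * (ω b z c)⁻¹) *
          (ω z a (b * c) * ω a (b * c) z * (ω a z (b * c))⁻¹) :=
  stmt19_general ω hω z hz
end
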